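/- Let F be a field, k ≥ 2, and let D(λ) = Σ_{i=0}^{k} D_i φ_i(λ) with D_i ∈ F^{m×m} and D_k ≠ 0. Let H ∈ F^{km×(k−1)m} be such that the pencil L(λ) := [e_k⊗I_m, H]·F_Φ^D(λ) is block-symmetric (i.e., L ∈ DM(D) with ansatz vector e_k, the last canonical vector of F^k). Then the constant matrix [e_k⊗I_m, H] ∈ F^{km×km} is nonsingular if and only if the leading coefficient D_k is nonsingular. -/

import Mathlib

open Matrix

/-- The column vector `Φ_k(λ) ⊗ I_m` as a `km × m` polynomial matrix. -/
noncomputable def phiKron {F : Type*} [Field F] (φ : ℕ → Polynomial F) (k m : ℕ) :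
    Matrix (Fin k × Fin m) (Fin m) (Polynomial F) :=
  Matrix.of fun p j => if p.2 = j then φ (k - 1 - (p.1 : ℕ)) else 0

/-- The pencil `M_Φ(λ) ∈ F[λ]^{(k-1)×k}`. -/
noncomputable def MPhiMat {F : Type*} [Field F] (α β γ : ℕ → F) (k : ℕ) :
    Matrix (Fin (k - 1)) (Fin k) (Polynomial F) :=
  Matrix.of fun i j =>
    if (j : ℕ) = (i : ℕ) then -Polynomial.C (α (k - 2 - (i : ℕ)))
    else if (j : ℕ) = (i : ℕ) + 1 then Polynomial.X - Polynomial.C (β (k - 2 - (i : ℕ)))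
    else if (j : ℕ) = (i : ℕ) + 2 then -Polynomial.C (γ (k - 2 - (i : ℕ)))
    else 0

/-- The block row `m_Φ^P(λ) ∈ F[λ]^{m×km}`. -/
noncomputable def mPhiMat {F : Type*} [Field F] (α β γ : ℕ → F) (k m : ℕ)
    (P : ℕ → Matrix (Fin m) (Fin m) F) :
    Matrix (Fin m) (Fin k × Fin m) (Polynomial F) :=
  Matrix.of fun r c =>
    if (c.1 : ℕ) = 0 then
      Polynomial.C ((α (k - 1))⁻¹) * (Polynomial.X - Polynomial.C (β (k - 1)))
          * Polynomial.C (P k r c.2)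
        + Polynomial.C (P (k - 1) r c.2)
    else if (c.1 : ℕ) = 1 then
      Polynomial.C (P (k - 2) r c.2)
        - Polynomial.C ((α (k - 1))⁻¹ * γ (k - 1)) * Polynomial.C (P k r c.2)
    else Polynomial.C (P (k - 1 - (c.1 : ℕ)) r c.2)

/-- The pencil `F_Φ^P(λ) = [m_Φ^P(λ); M_Φ(λ) ⊗ I_m] ∈ F[λ]^{km×km}`. -/
noncomputable def FPhiMat {F : Type*} [Field F] (α β γ : ℕ → F) (k m : ℕ)
    (P : ℕ → Matrix (Fin m) (Fin m) F) :
    Matrix (Fin k × Fin m) (Fin k × Fin m) (Polynomial F) :=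
  Matrix.of fun p q =>
    if h : (p.1 : ℕ) = 0 then mPhiMat α β γ k m P p.2 q
    else
      MPhiMat α β γ k ⟨(p.1 : ℕ) - 1, by have := p.1.isLt; omega⟩ q.1
        * (if p.2 = q.2 then 1 else 0)

/-- The constant `km × km` matrix `[v ⊗ I_m, H]`: column block `0` is `v ⊗ I_m`, column
blocks `1, …, k-1` are the `(k-1)m` columns of `H`. -/
def concatKron {F : Type*} [Field F] (k m : ℕ) (v : Fin k → F)
    (H : Matrix (Fin k × Fin m) (Fin (k - 1) × Fin m) F) :
    Matrix (Fin k × Fin m) (Fin k × Fin m) F :=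
  Matrix.of fun p q =>
    if h : (q.1 : ℕ) = 0 then (if p.2 = q.2 then v p.1 else 0)
    else H p (⟨(q.1 : ℕ) - 1, by have := q.1.isLt; omega⟩, q.2)

/-!
Cut `A = [e_k ⊗ I_m, H]` into `m × m` blocks `A_{ij}`. As `A` is constant, `L = A F_Φ^D` is block
symmetric iff both coefficients `A F₁` and `A F₀` of `L = λ A F₁ + A F₀` are. The `λ`-coefficient
gives `A_{ij} = A_{ji}` for `i, j ≥ 1` and `A_{0j} = δ_{j,k-1} α_{k-1}⁻¹ D_k`; on the rows `i < k - 1`,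
where `e_k` vanishes, the constant coefficient says that the three-term combination
`α_{n-j} A_{i,j+1} + β_{n+1-j} A_{ij} + γ_{n+2-j} A_{i,j-1}` (`n = k - 2`) is symmetric in `i, j`.
Induction along the antidiagonals then shows that `A` is block anti-triangular, its antidiagonal
blocks being nonzero multiples of `D_k` except for the block `I_m` in the corner `(k-1, 0)`.
So `det A = ± c · (det D_k)^{k-1}` with `c ≠ 0`.
-/

open Finset

section Blocks

variable {R ι : Type*} {k : ℕ}

/-- Padded with zeros outside `i, j < k`, so that the shifted blocks `j ± 1` of the three-term
recurrence need no side conditions. -/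
def natBlock [Zero R] (A : Matrix (Fin k × ι) (Fin k × ι) R) (i j : ℕ) : Matrix ι ι R :=
  if h : i < k ∧ j < k then Matrix.of fun r s => A (⟨i, h.1⟩, r) (⟨j, h.2⟩, s) else 0

theorem natBlock_apply [Zero R] (A : Matrix (Fin k × ι) (Fin k × ι) R) (i j : Fin k) (r s : ι) :
    natBlock A i j r s = A (i, r) (j, s) := by
  simp [natBlock]

theorem natBlock_mul [NonUnitalNonAssocSemiring R] [Fintype ι]
    (A B : Matrix (Fin k × ι) (Fin k × ι) R) (i j : ℕ) :
    natBlock (A * B) i j = ∑ l ∈ range k, natBlock A i l * natBlock B l j := by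
  by_cases h : i < k ∧ j < k
  · ext r s
    rw [Matrix.sum_apply,
      ← Fin.sum_univ_eq_sum_range fun l => (natBlock A i l * natBlock B l j) r s]
    simp [natBlock, h, Matrix.mul_apply, Fintype.sum_prod_type]
  · have hz : ∀ l < k, natBlock A i l * natBlock B l j = 0 := by
      intro l hl
      by_cases hi : i < k
      · simp [natBlock, show ¬ j < k by omega]
      · simp [natBlock, hi]
    rw [sum_eq_zero fun l hl => hz l (mem_range.mp hl)]
    simp [natBlock, h]

theorem isUnit_det_iff_of_blockAntitriangular [CommRing R] [Fintype ι] [DecidableEq ι]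
    (A : Matrix (Fin k × ι) (Fin k × ι) R) (hA : ∀ i j, i + j + 1 < k → natBlock A i j = 0) :
    IsUnit A.det ↔ ∀ j < k, IsUnit (natBlock A (k - 1 - j) j).det := by
  let σ : Equiv.Perm (Fin k × ι) := Fin.revPerm.prodCongr (Equiv.refl ι)
  let B := A.submatrix σ id
  have hB : B.BlockTriangular Prod.fst := by
    rintro ⟨i, r⟩ ⟨j, s⟩ (hji : j < i)
    change A (i.rev, r) (j, s) = 0
    rw [← natBlock_apply A, hA _ _ (by simp [Fin.val_rev]; omega), Matrix.zero_apply]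
  have hblock (j : Fin k) : (B.toSquareBlock Prod.fst j).det = (natBlock A (k - 1 - j) j).det := by
    let e : ι ≃ {p : Fin k × ι // p.1 = j} :=
      { toFun t := ⟨(j, t), rfl⟩
        invFun p := p.1.2
        left_inv _ := rfl
        right_inv := by rintro ⟨⟨_, _⟩, rfl⟩; rfl }
    rw [← Matrix.det_submatrix_equiv_self e]
    congr 1
    ext r s
    have : (⟨k - 1 - j, by omega⟩ : Fin k) = j.rev := by ext; simp [Fin.val_rev]; omega
    simp [B, σ, e, natBlock, Matrix.toSquareBlock_def, this, show k - 1 - (j : ℕ) < k by omega]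
  have hsign : IsUnit ((Equiv.Perm.sign σ : ℤ) : R) :=
    (Equiv.Perm.sign σ).isUnit.map (Int.castRingHom R)
  calc IsUnit A.det ↔ IsUnit B.det := by
        rw [Matrix.det_permute, IsUnit.mul_iff, and_iff_right hsign]
    _ ↔ _ := by
        rw [hB.det_fintype, IsUnit.prod_univ_iff, Fin.forall_iff]
        simp only [hblock]

theorem natBlock_map {S : Type*} [Zero R] [Zero S] (A : Matrix (Fin k × ι) (Fin k × ι) R)
    (f : R → S) (hf : f 0 = 0) (i j : ℕ) : natBlock (A.map f) i j = (natBlock A i j).map f := by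
  unfold natBlock
  split_ifs <;> ext <;> simp [hf]

theorem natBlock_comm_of_blockSymm [Zero R] {A : Matrix (Fin k × ι) (Fin k × ι) R}
    (hA : ∀ (i j : Fin k) (r s : ι), A (i, r) (j, s) = A (j, r) (i, s)) (i j : ℕ) :
    natBlock A i j = natBlock A j i := by
  unfold natBlock
  split_ifs <;> first | rfl | (ext; apply hA) | (exfalso; tauto)

section Coeff

open Polynomial

theorem map_coeff_map_C_mul {κ : Type*} [CommSemiring R] [Fintype κ] (A : Matrix κ κ R)
    (Q : Matrix κ κ R[X]) (d : ℕ) : (A.map C * Q).map (coeff · d) = A * Q.map (coeff · d) := by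
  ext p q
  simp [Matrix.mul_apply, coeff_C_mul]

theorem natBlock_mul_map_coeff_comm [CommSemiring R] [Fintype ι]
    (A : Matrix (Fin k × ι) (Fin k × ι) R) (Q : Matrix (Fin k × ι) (Fin k × ι) R[X])
    (h : ∀ (i j : Fin k) (r s : ι), (A.map C * Q) (i, r) (j, s) = (A.map C * Q) (j, r) (i, s))
    (d i j : ℕ) : natBlock (A * Q.map (coeff · d)) i j = natBlock (A * Q.map (coeff · d)) j i := by
  rw [← map_coeff_map_C_mul, natBlock_map _ _ (coeff_zero d), natBlock_map _ _ (coeff_zero d),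
    natBlock_comm_of_blockSymm h]

end Coeff

theorem isUnit_det_smul_iff [Field R] [Fintype ι] [DecidableEq ι] {c : R} (hc : c ≠ 0)
    (M : Matrix ι ι R) : IsUnit (c • M).det ↔ IsUnit M.det := by
  rw [Matrix.det_smul, IsUnit.mul_iff, and_iff_right (hc.isUnit.pow _)]

end Blocks

section ThreeTermSymm

variable {F M : Type*} [Field F] [AddCommGroup M] [Module F M]

def threeTerm (α β γ : ℕ → F) (n : ℕ) (b : ℕ → ℕ → M) (i j : ℕ) : M :=
  α (n - j) • b i (j + 1) + β (n + 1 - j) • b i j + γ (n + 2 - j) • b i (j - 1)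

structure ThreeTermSymm (α β γ : ℕ → F) (n : ℕ) (b : ℕ → ℕ → M) : Prop where
  symm : ∀ i j, i ≤ n → j ≤ n → b i j = b j i
  zero_left : ∀ j ≤ n, b 0 j = 0
  threeTerm_symm : ∀ i j, i ≤ n → j ≤ n → threeTerm α β γ n b i j = threeTerm α β γ n b j i

variable {α β γ : ℕ → F} {n : ℕ} {b : ℕ → ℕ → M}

theorem ThreeTermSymm.eq_zero_of_add_le (h : ThreeTermSymm α β γ n b) (hα : ∀ j, α j ≠ 0) :
    ∀ i j, i + j ≤ n → b i j = 0 := by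
  intro i
  induction i using Nat.strong_induction_on with
  | _ i ih =>
    rcases i with _ | t
    · exact fun j hj => h.zero_left j (by omega)
    intro j hj
    have h₁ : b t (j + 1) = 0 := ih t (by omega) _ (by omega)
    have h₂ : b t j = 0 := ih t (by omega) _ (by omega)
    have h₃ : b t (j - 1) = 0 := ih t (by omega) _ (by omega)
    have h₄ : b j t = 0 := by rw [← h.symm t j (by omega) (by omega), h₂]
    have h₅ : b j (t - 1) = 0 := by
      rw [h.symm j (t - 1) (by omega) (by omega), ih (t - 1) (by omega) j (by omega)]
    -- at `(t, j)` every block but `b j (t + 1)` has index sum `≤ t + j`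
    have hrec := h.threeTerm_symm t j (by omega) (by omega)
    simp only [threeTerm, h₁, h₂, h₃, h₄, h₅, smul_zero, add_zero] at hrec
    rw [h.symm _ _ (by omega) (by omega)]
    exact (smul_eq_zero.mp hrec.symm).resolve_left (hα _)

theorem ThreeTermSymm.antidiag_eq (h : ThreeTermSymm α β γ n b) (hα : ∀ j, α j ≠ 0) :
    ∀ i ≤ n, b i (n + 1 - i) = (∏ t ∈ range i, α t / α (n - t)) • b 0 (n + 1) := by
  intro i
  induction i with
  | zero => simp
  | succ t ih =>
    intro ht
    have hzero := h.eq_zero_of_add_le hα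
    -- at `(t, n - t)` only the two antidiagonal blocks survive
    have hrec := h.threeTerm_symm t (n - t) (by omega) (by omega)
    simp only [threeTerm, hzero t (n - t) (by omega), hzero t (n - t - 1) (by omega),
      hzero (n - t) t (by omega), hzero (n - t) (t - 1) (by omega), show n - (n - t) = t by omega,
      show n - t + 1 = n + 1 - t by omega, ih (by omega), smul_zero, add_zero] at hrec
    rw [show n + 1 - (t + 1) = n - t by omega, h.symm _ _ (by omega) (by omega), prod_range_succ,
      mul_comm, div_eq_inv_mul, mul_assoc, mul_smul, eq_inv_smul_iff₀ (hα _), mul_smul, hrec]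

end ThreeTermSymm

theorem ThreeTermSymm.isUnit_det_iff {F ι : Type*} [Field F] [Fintype ι] [DecidableEq ι]
    {α β γ : ℕ → F} {n : ℕ} {A : Matrix (Fin (n + 2) × ι) (Fin (n + 2) × ι) F}
    (h : ThreeTermSymm α β γ n (natBlock A)) (hα : ∀ j, α j ≠ 0)
    (hlast : IsUnit (natBlock A (n + 1) 0).det) :
    IsUnit A.det ↔ IsUnit (natBlock A 0 (n + 1)).det := by
  rw [isUnit_det_iff_of_blockAntitriangular A fun i j hij =>
    h.eq_zero_of_add_le hα i j (by omega)]
  refine ⟨fun hA => by simpa using hA (n + 1) (by omega), fun h₀ j hj => ?_⟩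
  rcases Nat.eq_zero_or_pos j with rfl | hj₀
  · simpa using hlast
  · have hc : ∏ t ∈ range (n + 1 - j), α t / α (n - t) ≠ 0 :=
      prod_ne_zero_iff.mpr fun t _ => div_ne_zero (hα _) (hα _)
    have hanti := h.antidiag_eq hα (n + 1 - j) (by omega)
    rw [show n + 1 - (n + 1 - j) = j by omega] at hanti
    rwa [show n + 2 - 1 - j = n + 1 - j by omega, hanti, isUnit_det_smul_iff hc]

section Pencil

open Polynomial

variable {F : Type*} [Field F] {m : ℕ} {α β γ : ℕ → F} {P : ℕ → Matrix (Fin m) (Fin m) F}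

theorem natBlock_FPhiMat_coeff_one {k l j : ℕ} (hl : l < k) (hj : j < k) :
    natBlock ((FPhiMat α β γ k m P).map (coeff · 1)) l j =
      if j = 0 then (if l = 0 then (α (k - 1))⁻¹ • P k else 0) else if l = j then 1 else 0 := by
  ext r s
  simp only [natBlock, dif_pos (And.intro hl hj), Matrix.of_apply, Matrix.map_apply, FPhiMat,
    mPhiMat, MPhiMat]
  split_ifs <;> simp only [Matrix.one_apply, Matrix.zero_apply, Matrix.smul_apply, smul_eq_mul] <;>
    (try split_ifs) <;> simp [coeff_X] <;> omega

/-- Under `1 ≤ l`, the truncated `l = j - 1` means `l + 1 = j`. -/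
theorem natBlock_FPhiMat_coeff_zero {n l j : ℕ} (hl₀ : 1 ≤ l) (hl : l < n + 2) (hj : j < n + 2) :
    natBlock ((FPhiMat α β γ (n + 2) m P).map (coeff · 0)) l j =
      -((if l = j + 1 then α (n - j) else 0) + (if l = j then β (n + 1 - j) else 0)
        + (if l = j - 1 then γ (n + 2 - j) else 0)) • (1 : Matrix (Fin m) (Fin m) F) := by
  ext r s
  simp only [natBlock, dif_pos (And.intro hl hj), Matrix.of_apply, Matrix.map_apply, FPhiMat,
    MPhiMat, dif_neg (show l ≠ 0 by omega), Matrix.smul_apply, Matrix.one_apply, smul_eq_mul]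
  obtain ⟨l, rfl⟩ : ∃ l', l = l' + 1 := ⟨l - 1, by omega⟩
  rcases (show j = l ∨ j = l + 1 ∨ j = l + 2 ∨ (j ≠ l ∧ j ≠ l + 1 ∧ j ≠ l + 2) by omega) with
    rfl | rfl | rfl | ⟨h₀, h₁, h₂⟩
  · by_cases r = s <;> simp [*, show j + 1 ≠ j - 1 by omega]
  · by_cases r = s <;> simp [*, coeff_X]
  · by_cases r = s <;> simp [*]
  · have h₃ : l + 1 ≠ j - 1 := by omega
    simp [h₀, h₁, h₂, h₃, Ne.symm h₀, Ne.symm h₁]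

theorem natBlock_mul_FPhiMat_coeff_one {k : ℕ} (A : Matrix (Fin k × Fin m) (Fin k × Fin m) F)
    (i : ℕ) {j : ℕ} (hj₀ : 1 ≤ j) (hj : j < k) :
    natBlock (A * (FPhiMat α β γ k m P).map (coeff · 1)) i j = natBlock A i j := by
  rw [natBlock_mul, sum_eq_single_of_mem j (mem_range.mpr hj)]
  · simp [natBlock_FPhiMat_coeff_one hj hj, show j ≠ 0 by omega]
  · intro l hl hlj
    simp [natBlock_FPhiMat_coeff_one (mem_range.mp hl) hj, show j ≠ 0 by omega, hlj]

theorem natBlock_mul_FPhiMat_coeff_one_zero {k : ℕ}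
    (A : Matrix (Fin k × Fin m) (Fin k × Fin m) F) (i : ℕ) (hk : 0 < k) :
    natBlock (A * (FPhiMat α β γ k m P).map (coeff · 1)) i 0 =
      natBlock A i 0 * (α (k - 1))⁻¹ • P k := by
  rw [natBlock_mul, sum_eq_single_of_mem 0 (mem_range.mpr hk)]
  · simp [natBlock_FPhiMat_coeff_one hk hk]
  · intro l hl hl0
    simp [natBlock_FPhiMat_coeff_one (mem_range.mp hl) hk, hl0]

theorem natBlock_mul_FPhiMat_coeff_zero {n : ℕ}
    (A : Matrix (Fin (n + 2) × Fin m) (Fin (n + 2) × Fin m) F)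
    {i j : ℕ} (hA : natBlock A i 0 = 0) (hj : j ≤ n) :
    natBlock (A * (FPhiMat α β γ (n + 2) m P).map (coeff · 0)) i j =
      -threeTerm α β γ n (natBlock A) i j := by
  have hterm : ∀ l ∈ range (n + 2),
      natBlock A i l * natBlock ((FPhiMat α β γ (n + 2) m P).map (coeff · 0)) l j =
        -((if l = j + 1 then α (n - j) • natBlock A i l else 0)
          + (if l = j then β (n + 1 - j) • natBlock A i l else 0)
          + (if l = j - 1 then γ (n + 2 - j) • natBlock A i l else 0)) := by
    intro l hl
    rcases Nat.eq_zero_or_pos l with rfl | hl₀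
    · simp [hA]
    · rw [natBlock_FPhiMat_coeff_zero hl₀ (mem_range.mp hl) (by omega)]
      rw [Matrix.mul_smul, Matrix.mul_one]
      simp only [neg_smul, add_smul, ite_smul, zero_smul]
  rw [natBlock_mul, sum_congr rfl hterm, sum_neg_distrib, sum_add_distrib, sum_add_distrib,
    sum_ite_eq', sum_ite_eq', sum_ite_eq', threeTerm]
  simp [show j + 1 < n + 2 by omega, show j < n + 2 by omega, show j - 1 < n + 2 by omega]

theorem natBlock_concatKron_zero {k : ℕ} (v : Fin k → F)
    (H : Matrix (Fin k × Fin m) (Fin (k - 1) × Fin m) F) (i : ℕ) :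
    natBlock (concatKron k m v H) i 0 = if h : i < k then v ⟨i, h⟩ • 1 else 0 := by
  unfold natBlock
  split_ifs <;> first | omega | (ext; simp [concatKron, Matrix.one_apply])

end Pencil

section BlockSymmetricPencil

open Polynomial

variable {F : Type*} [Field F] {m n : ℕ} {α β γ : ℕ → F} {D : ℕ → Matrix (Fin m) (Fin m) F}
  {A : Matrix (Fin (n + 2) × Fin m) (Fin (n + 2) × Fin m) F}

theorem natBlock_zero_left_of_blockSymm (hcol : ∀ i, natBlock A i 0 = if i = n + 1 then 1 else 0)
    (hcomm : ∀ d i j, natBlock (A * (FPhiMat α β γ (n + 2) m D).map (coeff · d)) i j =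
      natBlock (A * (FPhiMat α β γ (n + 2) m D).map (coeff · d)) j i)
    {j : ℕ} (hj₀ : 1 ≤ j) (hj : j ≤ n + 1) :
    natBlock A 0 j = if j = n + 1 then (α (n + 1))⁻¹ • D (n + 2) else 0 := by
  have := hcomm 1 0 j
  rw [natBlock_mul_FPhiMat_coeff_one A 0 hj₀ (by omega),
    natBlock_mul_FPhiMat_coeff_one_zero A j (by omega), hcol] at this
  split_ifs at this ⊢ <;> simp_all

theorem threeTermSymm_of_blockSymm (hcol : ∀ i, natBlock A i 0 = if i = n + 1 then 1 else 0)
    (hcomm : ∀ d i j, natBlock (A * (FPhiMat α β γ (n + 2) m D).map (coeff · d)) i j =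
      natBlock (A * (FPhiMat α β γ (n + 2) m D).map (coeff · d)) j i) :
    ThreeTermSymm α β γ n (natBlock A) := by
  have hrow (j : ℕ) (hj : j ≤ n) : natBlock A 0 j = 0 := by
    rcases Nat.eq_zero_or_pos j with rfl | hj₀
    · simp [hcol]
    · simp [natBlock_zero_left_of_blockSymm hcol hcomm hj₀ (by omega), show j ≠ n + 1 by omega]
  refine ⟨fun i j hi hj => ?_, hrow, fun i j hi hj => ?_⟩
  · rcases Nat.eq_zero_or_pos i with rfl | hi₀
    · rw [hrow j hj, hcol, if_neg (by omega)]
    rcases Nat.eq_zero_or_pos j with rfl | hj₀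
    · rw [hrow i hi, hcol, if_neg (by omega)]
    have := hcomm 1 i j
    rwa [natBlock_mul_FPhiMat_coeff_one A i hj₀ (by omega),
      natBlock_mul_FPhiMat_coeff_one A j hi₀ (by omega)] at this
  · have := hcomm 0 i j
    rwa [natBlock_mul_FPhiMat_coeff_zero A (by rw [hcol, if_neg (by omega)]) hj,
      natBlock_mul_FPhiMat_coeff_zero A (by rw [hcol, if_neg (by omega)]) hi,
      neg_inj] at this

end BlockSymmetricPencil

theorem concat_nonsingular_iff_leadingCoeff_nonsingular_general
    {F : Type*} [Field F] {m k : ℕ} (hk : 2 ≤ k)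
    (α β γ : ℕ → F) (hα : ∀ j, α j ≠ 0)
    (D : ℕ → Matrix (Fin m) (Fin m) F)
    (H : Matrix (Fin k × Fin m) (Fin (k - 1) × Fin m) F)
    (ek : Fin k → F) (hek : ek = fun i : Fin k => if (i : ℕ) = k - 1 then 1 else 0)
    (L : Matrix (Fin k × Fin m) (Fin k × Fin m) (Polynomial F))
    (hL : L = (concatKron k m ek H).map Polynomial.C * FPhiMat α β γ k m D)
    (hblocksym : ∀ (i j : Fin k) (r s : Fin m), L (i, r) (j, s) = L (j, r) (i, s)) :
    IsUnit (concatKron k m ek H).det ↔ IsUnit (D k).det := by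
  obtain ⟨n, rfl⟩ : ∃ n, k = n + 2 := ⟨k - 2, by omega⟩
  subst hek hL
  set A := concatKron (n + 2) m _ H
  have hcol (i : ℕ) : natBlock A i 0 = if i = n + 1 then 1 else 0 := by
    rw [natBlock_concatKron_zero]
    split_ifs <;> simp_all
  have hcomm := natBlock_mul_map_coeff_comm A _ hblocksym
  rw [(threeTermSymm_of_blockSymm hcol hcomm).isUnit_det_iff hα (by simp [hcol]),
    natBlock_zero_left_of_blockSymm hcol hcomm (by omega) le_rfl, if_pos rfl,
    isUnit_det_smul_iff (inv_ne_zero (hα _))]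

/-- For `D(λ) = Σ_{i=0}^{k} D_i φ_i(λ)` of degree `k ≥ 2`, if the pencil
`L(λ) = [e_k ⊗ I_m, H] F_Φ^D(λ)` is block-symmetric (that is, `L ∈ 𝔻𝕄(D)` with ansatz
vector `e_k`), then `[e_k ⊗ I_m, H]` is nonsingular iff the leading coefficient `D_k` is
nonsingular. -/
theorem concat_nonsingular_iff_leadingCoeff_nonsingular
    {F : Type*} [Field F] {m k : ℕ} (hk : 2 ≤ k)
    (α β γ : ℕ → F) (hα : ∀ j, α j ≠ 0)
    (φ : ℕ → Polynomial F) (hφ0 : φ 0 = 1)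
    (hrec : ∀ j : ℕ, Polynomial.C (α j) * φ (j + 1)
      = (Polynomial.X - Polynomial.C (β j)) * φ j
        - Polynomial.C (γ j) * (if j = 0 then 0 else φ (j - 1)))
    (D : ℕ → Matrix (Fin m) (Fin m) F) (hDk : D k ≠ 0)
    (H : Matrix (Fin k × Fin m) (Fin (k - 1) × Fin m) F)
    (ek : Fin k → F) (hek : ek = fun i : Fin k => if (i : ℕ) = k - 1 then 1 else 0)
    (L : Matrix (Fin k × Fin m) (Fin k × Fin m) (Polynomial F))
    (hL : L = (concatKron k m ek H).map Polynomial.C * FPhiMat α β γ k m D)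
    (hblocksym : ∀ (i j : Fin k) (r s : Fin m), L (i, r) (j, s) = L (j, r) (i, s)) :
    IsUnit (concatKron k m ek H).det ↔ IsUnit (D k).det :=
  concat_nonsingular_iff_leadingCoeff_nonsingular_general hk α β γ hα D H ek hek L hL hblocksym
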